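/- Fix real numbers d > 0, β > 0, c > 0 and set λ_1 = (−c + √(c² + 4βd))/(2d) and λ_2 = (c + √(c² + 4βd))/(2d), so that −λ_1 and λ_2 are the two roots of dλ² − cλ − β = 0. For a bounded continuous H : ℝ → ℝ define T[H](ξ) = (1/(d(λ_1 + λ_2))) (∫_{−∞}^{ξ} e^{−λ_1(ξ−s)} H(s) ds + ∫_{ξ}^{∞} e^{λ_2(ξ−s)} H(s) ds). Let Λ, ν, k be real numbers with 0 < Λ < λ_2, ν > 0, k > 0, and assume λ_2(dΛ − c) ≤ β. Set M = (β + cΛ − dΛ²)ν and ξ* = (1/Λ) ln(k/ν). If H : ℝ → ℝ is continuous, 0 ≤ H(s) ≤ M e^{Λs} for all s ≤ ξ*, and 0 ≤ H(s) ≤ βk for all s ≥ ξ*, then T[H](ξ) ≤ min(k, ν e^{Λξ}) for every ξ ∈ ℝ. -/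

import Mathlib

/-!
`Tsc d β c = greenOp d λ₁ λ₂`, where `-λ₁ < 0 < λ₂` are the roots of `dλ² - cλ - β`, is
convolution with the Green function of `-dφ'' + cφ' + βφ`. Hence it maps `A e^{a·}` to
`A e^{a·} / (d (λ₁ + a) (λ₂ - a))` for `-λ₁ < a < λ₂`, and `d (λ₁ + Λ) (λ₂ - Λ) = β + cΛ - dΛ²`:
so `T[(β + cΛ - dΛ²) ν e^{Λ·}] = ν e^{Λ·}` and `T[βk] = k`.

Left of the threshold `ξ*` (where `ν e^{Λξ*} = k`) we compare `H` with `(β + cΛ - dΛ²) ν e^{Λ·}`,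
right of it with `βk`. In each case `H` lies below the comparison function pointwise except on
the half-line beyond `ξ*` away from `ξ`, and there the comparison still holds after integration
against the kernel: it reduces to `λ₁ ≤ λ₁ + Λ`, resp. `λ₂ - Λ ≤ λ₂`.
-/

open MeasureTheory

/-- The scalar integral operator `T` of (4.13):
`T[H](ξ) = (1/(d(λ₁+λ₂))) (∫_{-∞}^{ξ} e^{-λ₁(ξ-s)} H(s) ds + ∫_{ξ}^{∞} e^{λ₂(ξ-s)} H(s) ds)`,
where `-λ₁, λ₂` are the roots of `dλ² - cλ - β = 0`. -/
noncomputable def Tsc (d β c : ℝ) (H : ℝ → ℝ) (ξ : ℝ) : ℝ :=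
  let l₁ : ℝ := (-c + Real.sqrt (c ^ 2 + 4 * β * d)) / (2 * d)
  let l₂ : ℝ := (c + Real.sqrt (c ^ 2 + 4 * β * d)) / (2 * d)
  (1 / (d * (l₁ + l₂))) *
    ((∫ s in Set.Iic ξ, Real.exp (-l₁ * (ξ - s)) * H s) +
     (∫ s in Set.Ici ξ, Real.exp (l₂ * (ξ - s)) * H s))

open Real Set

noncomputable def greenOp (d l₁ l₂ : ℝ) (H : ℝ → ℝ) (ξ : ℝ) : ℝ :=
  (1 / (d * (l₁ + l₂))) *
    ((∫ s in Iic ξ, exp (-l₁ * (ξ - s)) * H s) + ∫ s in Ici ξ, exp (l₂ * (ξ - s)) * H s)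

private lemma exp_mul_sub_mul_exp_left (l a A ξ s : ℝ) :
    exp (-l * (ξ - s)) * (A * exp (a * s)) = A * exp (-l * ξ) * exp ((l + a) * s) := by
  rw [mul_assoc, ← exp_add, mul_left_comm, ← exp_add]; ring_nf

private lemma exp_mul_sub_mul_exp_right (l a A ξ s : ℝ) :
    exp (l * (ξ - s)) * (A * exp (a * s)) = A * exp (l * ξ) * exp ((a - l) * s) := by
  rw [mul_assoc, ← exp_add, mul_left_comm, ← exp_add]; ring_nf

section Kernel

variable {l a : ℝ}

lemma integrableOn_Iic_exp_mul_exp (h : 0 < l + a) (A ξ t : ℝ) :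
    IntegrableOn (fun s => exp (-l * (ξ - s)) * (A * exp (a * s))) (Iic t) := by
  simp_rw [exp_mul_sub_mul_exp_left]
  exact (integrableOn_exp_mul_Iic h t).const_mul _

lemma integrableOn_Ioi_exp_mul_exp (h : a < l) (A ξ t : ℝ) :
    IntegrableOn (fun s => exp (l * (ξ - s)) * (A * exp (a * s))) (Ioi t) := by
  simp_rw [exp_mul_sub_mul_exp_right]
  exact (integrableOn_exp_mul_Ioi (sub_neg.2 h) t).const_mul _

lemma integral_Iic_exp_mul_exp (h : 0 < l + a) (A ξ t : ℝ) :
    ∫ s in Iic t, exp (-l * (ξ - s)) * (A * exp (a * s))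
      = A * exp (-l * (ξ - t)) * exp (a * t) / (l + a) := by
  simp_rw [exp_mul_sub_mul_exp_left, integral_const_mul, integral_exp_mul_Iic h]
  have : exp (-l * (ξ - t)) * exp (a * t) = exp (-l * ξ) * exp ((l + a) * t) := by
    rw [← exp_add, ← exp_add]; ring_nf
  rw [mul_assoc A (exp (-l * (ξ - t))), this]
  ring

lemma integral_Ioi_exp_mul_exp (h : a < l) (A ξ t : ℝ) :
    ∫ s in Ioi t, exp (l * (ξ - s)) * (A * exp (a * s))
      = A * exp (l * (ξ - t)) * exp (a * t) / (l - a) := by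
  simp_rw [exp_mul_sub_mul_exp_right, integral_const_mul, integral_exp_mul_Ioi (sub_neg.2 h)]
  have : exp (l * (ξ - t)) * exp (a * t) = exp (l * ξ) * exp ((a - l) * t) := by
    rw [← exp_add, ← exp_add]; ring_nf
  rw [mul_assoc A (exp (l * (ξ - t))), this, ← neg_sub l a, div_neg]
  ring

variable {C : ℝ} {G : ℝ → ℝ}

lemma integrableOn_Iic_exp_mul_of_bounded (hl : 0 < l) (hG : Continuous G)
    (hGC : ∀ s, |G s| ≤ C) (ξ t : ℝ) :
    IntegrableOn (fun s => exp (-l * (ξ - s)) * G s) (Iic t) := by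
  have hK : IntegrableOn (fun s => exp (-l * (ξ - s))) (Iic t) := by
    simpa using integrableOn_Iic_exp_mul_exp (a := 0) (by simpa using hl) 1 ξ t
  exact hK.mul_bdd hG.aestronglyMeasurable (ae_of_all _ hGC)

lemma integrableOn_Ioi_exp_mul_of_bounded (hl : 0 < l) (hG : Continuous G)
    (hGC : ∀ s, |G s| ≤ C) (ξ t : ℝ) :
    IntegrableOn (fun s => exp (l * (ξ - s)) * G s) (Ioi t) := by
  have hK : IntegrableOn (fun s => exp (l * (ξ - s))) (Ioi t) := by
    simpa using integrableOn_Ioi_exp_mul_exp (a := 0) hl 1 ξ t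
  exact hK.mul_bdd hG.aestronglyMeasurable (ae_of_all _ hGC)

end Kernel

lemma setIntegral_Ioi_mono_of_tail {f g : ℝ → ℝ} {a t : ℝ} (hat : a ≤ t)
    (hf : IntegrableOn f (Ioi a)) (hg : IntegrableOn g (Ioi a))
    (hfg : ∀ s ∈ Ioc a t, f s ≤ g s) (htail : ∫ s in Ioi t, f s ≤ ∫ s in Ioi t, g s) :
    ∫ s in Ioi a, f s ≤ ∫ s in Ioi a, g s := by
  have split : ∀ {h : ℝ → ℝ}, IntegrableOn h (Ioi a) →
      ∫ s in Ioi a, h s = (∫ s in Ioc a t, h s) + ∫ s in Ioi t, h s := fun hh => by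
    rw [← Ioc_union_Ioi_eq_Ioi hat, setIntegral_union (Ioc_disjoint_Ioi le_rfl) measurableSet_Ioi
      (hh.mono_set Ioc_subset_Ioi_self) (hh.mono_set (Ioi_subset_Ioi hat))]
  rw [split hf, split hg]
  exact add_le_add (setIntegral_mono_on (hf.mono_set Ioc_subset_Ioi_self)
    (hg.mono_set Ioc_subset_Ioi_self) measurableSet_Ioc hfg) htail

lemma setIntegral_Iic_mono_of_tail {f g : ℝ → ℝ} {a t : ℝ} (hta : t ≤ a)
    (hf : IntegrableOn f (Iic a)) (hg : IntegrableOn g (Iic a))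
    (hfg : ∀ s ∈ Ioc t a, f s ≤ g s) (htail : ∫ s in Iic t, f s ≤ ∫ s in Iic t, g s) :
    ∫ s in Iic a, f s ≤ ∫ s in Iic a, g s := by
  have split : ∀ {h : ℝ → ℝ}, IntegrableOn h (Iic a) →
      ∫ s in Iic a, h s = (∫ s in Iic t, h s) + ∫ s in Ioc t a, h s := fun hh => by
    rw [← Iic_union_Ioc_eq_Iic hta, setIntegral_union (Iic_disjoint_Ioc le_rfl) measurableSet_Ioc
      (hh.mono_set (Iic_subset_Iic.2 hta)) (hh.mono_set Ioc_subset_Iic_self)]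
  rw [split hf, split hg]
  exact add_le_add htail (setIntegral_mono_on (hf.mono_set Ioc_subset_Iic_self)
    (hg.mono_set Ioc_subset_Iic_self) measurableSet_Ioc hfg)

section greenOp
variable {d l₁ l₂ : ℝ}

lemma greenOp_mono {H G : ℝ → ℝ} {ξ : ℝ} (hd : 0 ≤ d * (l₁ + l₂))
    (hleft : ∫ s in Iic ξ, exp (-l₁ * (ξ - s)) * H s ≤ ∫ s in Iic ξ, exp (-l₁ * (ξ - s)) * G s)
    (hright : ∫ s in Ioi ξ, exp (l₂ * (ξ - s)) * H s ≤ ∫ s in Ioi ξ, exp (l₂ * (ξ - s)) * G s) :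
    greenOp d l₁ l₂ H ξ ≤ greenOp d l₁ l₂ G ξ := by
  unfold greenOp
  rw [integral_Ici_eq_integral_Ioi, integral_Ici_eq_integral_Ioi]
  gcongr

lemma greenOp_exp {a : ℝ} (hd : d ≠ 0) (h₁ : 0 < l₁ + a) (h₂ : a < l₂) (A ξ : ℝ) :
    greenOp d l₁ l₂ (fun s => A * exp (a * s)) ξ
      = A * exp (a * ξ) / (d * (l₁ + a) * (l₂ - a)) := by
  unfold greenOp
  rw [integral_Ici_eq_integral_Ioi, integral_Iic_exp_mul_exp h₁, integral_Ioi_exp_mul_exp h₂]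
  have : l₂ - a ≠ 0 := (sub_pos.2 h₂).ne'
  have : l₁ + l₂ ≠ 0 := by linarith
  simp only [sub_self, mul_zero, exp_zero, mul_one]
  field_simp
  ring

lemma greenOp_const (hd : d ≠ 0) (h₁ : 0 < l₁) (h₂ : 0 < l₂) (A ξ : ℝ) :
    greenOp d l₁ l₂ (fun _ => A) ξ = A / (d * l₁ * l₂) := by
  simpa using greenOp_exp (a := 0) hd (by simpa using h₁) h₂ A ξ

end greenOp

section UpperSolution
variable {d l₁ l₂ Λ ν k t C : ℝ} {H : ℝ → ℝ}

lemma greenOp_le_exp_of_le_threshold (hd : 0 < d) (hl₁ : 0 < l₁) (hΛ : 0 ≤ Λ) (hΛl₂ : Λ < l₂)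
    (hν : 0 ≤ ν) (hk : ν * exp (Λ * t) = k) (hH : Continuous H) (hHC : ∀ s, |H s| ≤ C)
    (hH₁ : ∀ s ≤ t, H s ≤ d * (l₁ + Λ) * (l₂ - Λ) * ν * exp (Λ * s))
    (hH₂ : ∀ s, t ≤ s → H s ≤ d * l₁ * l₂ * k) {ξ : ℝ} (hξ : ξ ≤ t) :
    greenOp d l₁ l₂ H ξ ≤ ν * exp (Λ * ξ) := by
  have hl₂ : 0 < l₂ := hΛ.trans_lt hΛl₂
  have hΛl₁ : 0 < l₁ + Λ := by positivity
  set M := d * (l₁ + Λ) * (l₂ - Λ) * ν with hM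
  have tail : ∫ s in Ioi t, exp (l₂ * (ξ - s)) * H s
      ≤ ∫ s in Ioi t, exp (l₂ * (ξ - s)) * (M * exp (Λ * s)) := by
    have hconst := integral_Ioi_exp_mul_exp (a := 0) hl₂ (d * l₁ * l₂ * k) ξ t
    simp only [zero_mul, exp_zero, mul_one, sub_zero] at hconst
    calc ∫ s in Ioi t, exp (l₂ * (ξ - s)) * H s
        ≤ ∫ s in Ioi t, exp (l₂ * (ξ - s)) * (d * l₁ * l₂ * k) :=
          setIntegral_mono_on (integrableOn_Ioi_exp_mul_of_bounded hl₂ hH hHC ξ t)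
            (integrableOn_Ioi_exp_mul_of_bounded hl₂ continuous_const
              (fun _ => le_abs_self _) ξ t) measurableSet_Ioi
            (fun s hs => mul_le_mul_of_nonneg_left (hH₂ s hs.le) (exp_pos _).le)
      _ = d * l₁ * k * exp (l₂ * (ξ - t)) := by rw [hconst]; field_simp
      _ ≤ d * (l₁ + Λ) * k * exp (l₂ * (ξ - t)) := by
          have : 0 ≤ k := hk ▸ by positivity
          gcongr; linarith
      _ = ∫ s in Ioi t, exp (l₂ * (ξ - s)) * (M * exp (Λ * s)) := by
          rw [integral_Ioi_exp_mul_exp hΛl₂, ← hk]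
          field_simp [M, (sub_pos.2 hΛl₂).ne']
          ring
  calc greenOp d l₁ l₂ H ξ ≤ greenOp d l₁ l₂ (fun s => M * exp (Λ * s)) ξ := by
        refine greenOp_mono (by positivity) ?_ ?_
        · exact setIntegral_mono_on (integrableOn_Iic_exp_mul_of_bounded hl₁ hH hHC ξ ξ)
            (integrableOn_Iic_exp_mul_exp hΛl₁ M ξ ξ) measurableSet_Iic
            (fun s hs => mul_le_mul_of_nonneg_left (hH₁ s (le_trans hs hξ)) (exp_pos _).le)
        · exact setIntegral_Ioi_mono_of_tail hξ
            (integrableOn_Ioi_exp_mul_of_bounded hl₂ hH hHC ξ ξ)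
            (integrableOn_Ioi_exp_mul_exp hΛl₂ M ξ ξ)
            (fun s hs => mul_le_mul_of_nonneg_left (hH₁ s hs.2) (exp_pos _).le) tail
    _ = ν * exp (Λ * ξ) := by
        rw [greenOp_exp hd.ne' hΛl₁ hΛl₂, hM]
        field_simp [(sub_pos.2 hΛl₂).ne']

lemma greenOp_le_of_threshold_le (hd : 0 < d) (hl₁ : 0 < l₁) (hΛ : 0 ≤ Λ) (hΛl₂ : Λ < l₂)
    (hν : 0 ≤ ν) (hk : ν * exp (Λ * t) = k) (hH : Continuous H) (hHC : ∀ s, |H s| ≤ C)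
    (hH₁ : ∀ s ≤ t, H s ≤ d * (l₁ + Λ) * (l₂ - Λ) * ν * exp (Λ * s))
    (hH₂ : ∀ s, t ≤ s → H s ≤ d * l₁ * l₂ * k) {ξ : ℝ} (hξ : t ≤ ξ) :
    greenOp d l₁ l₂ H ξ ≤ k := by
  have hl₂ : 0 < l₂ := hΛ.trans_lt hΛl₂
  have hΛl₁ : 0 < l₁ + Λ := by positivity
  set B := d * l₁ * l₂ * k with hB
  have tail : ∫ s in Iic t, exp (-l₁ * (ξ - s)) * H s ≤ ∫ s in Iic t, exp (-l₁ * (ξ - s)) * B := by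
    have hconst := integral_Iic_exp_mul_exp (a := 0) (by simpa using hl₁) B ξ t
    simp only [zero_mul, exp_zero, mul_one, add_zero] at hconst
    calc ∫ s in Iic t, exp (-l₁ * (ξ - s)) * H s
        ≤ ∫ s in Iic t, exp (-l₁ * (ξ - s)) * (d * (l₁ + Λ) * (l₂ - Λ) * ν * exp (Λ * s)) :=
          setIntegral_mono_on (integrableOn_Iic_exp_mul_of_bounded hl₁ hH hHC ξ t)
            (integrableOn_Iic_exp_mul_exp hΛl₁ _ ξ t) measurableSet_Iic
            (fun s hs => mul_le_mul_of_nonneg_left (hH₁ s hs) (exp_pos _).le)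
      _ = d * (l₂ - Λ) * k * exp (-l₁ * (ξ - t)) := by
          rw [integral_Iic_exp_mul_exp hΛl₁, ← hk]
          field_simp
      _ ≤ d * l₂ * k * exp (-l₁ * (ξ - t)) := by
          have : 0 ≤ k := hk ▸ by positivity
          gcongr; linarith
      _ = ∫ s in Iic t, exp (-l₁ * (ξ - s)) * B := by rw [hconst, hB]; field_simp
  calc greenOp d l₁ l₂ H ξ ≤ greenOp d l₁ l₂ (fun _ => B) ξ := by
        refine greenOp_mono (by positivity) ?_ ?_
        · exact setIntegral_Iic_mono_of_tail hξ
            (integrableOn_Iic_exp_mul_of_bounded hl₁ hH hHC ξ ξ)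
            (integrableOn_Iic_exp_mul_of_bounded hl₁ continuous_const
              (fun _ => le_abs_self _) ξ ξ)
            (fun s hs => mul_le_mul_of_nonneg_left (hH₂ s hs.1.le) (exp_pos _).le) tail
        · exact setIntegral_mono_on (integrableOn_Ioi_exp_mul_of_bounded hl₂ hH hHC ξ ξ)
            (integrableOn_Ioi_exp_mul_of_bounded hl₂ continuous_const
              (fun _ => le_abs_self _) ξ ξ) measurableSet_Ioi
            (fun s hs => mul_le_mul_of_nonneg_left (hH₂ s (hξ.trans hs.le)) (exp_pos _).le)
    _ = k := by
        rw [greenOp_const hd.ne' hl₁ hl₂, hB]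
        field_simp

theorem greenOp_le_min (hd : 0 < d) (hl₁ : 0 < l₁) (hΛ : 0 ≤ Λ) (hΛl₂ : Λ < l₂) (hν : 0 ≤ ν)
    (hk : ν * exp (Λ * t) = k) (hH : Continuous H)
    (hH₁ : ∀ s ≤ t, 0 ≤ H s ∧ H s ≤ d * (l₁ + Λ) * (l₂ - Λ) * ν * exp (Λ * s))
    (hH₂ : ∀ s, t ≤ s → 0 ≤ H s ∧ H s ≤ d * l₁ * l₂ * k) (ξ : ℝ) :
    greenOp d l₁ l₂ H ξ ≤ min k (ν * exp (Λ * ξ)) := by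
  have hHC : ∀ s, |H s| ≤ max (d * (l₁ + Λ) * (l₂ - Λ) * ν * exp (Λ * t)) (d * l₁ * l₂ * k) := by
    intro s
    rcases le_total s t with hs | hs
    · have : 0 ≤ d * (l₁ + Λ) * (l₂ - Λ) * ν := by
        have := sub_pos.2 hΛl₂; positivity
      rw [abs_of_nonneg (hH₁ s hs).1]
      exact le_max_of_le_left ((hH₁ s hs).2.trans (by gcongr))
    · rw [abs_of_nonneg (hH₂ s hs).1]
      exact le_max_of_le_right (hH₂ s hs).2
  rcases le_total ξ t with hξ | hξ
  · have h := greenOp_le_exp_of_le_threshold hd hl₁ hΛ hΛl₂ hν hk hH hHC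
      (fun s hs => (hH₁ s hs).2) (fun s hs => (hH₂ s hs).2) hξ
    exact le_min (h.trans (hk ▸ by gcongr)) h
  · have h := greenOp_le_of_threshold_le hd hl₁ hΛ hΛl₂ hν hk hH hHC
      (fun s hs => (hH₁ s hs).2) (fun s hs => (hH₂ s hs).2) hξ
    exact le_min h (h.trans (hk ▸ by gcongr))

end UpperSolution

theorem stmt_14_general (d β c : ℝ) (hd : 0 < d) (hβ : 0 < β)
    (Λ ν k : ℝ) (hΛ : 0 < Λ)
    (hΛ2 : Λ < (c + Real.sqrt (c ^ 2 + 4 * β * d)) / (2 * d)) (hν : 0 < ν) (hk : 0 < k)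
    (H : ℝ → ℝ) (hH : Continuous H)
    (hH1 : ∀ s : ℝ, s ≤ (1 / Λ) * Real.log (k / ν) →
      0 ≤ H s ∧ H s ≤ (β - d * Λ ^ 2 + c * Λ) * ν * Real.exp (Λ * s))
    (hH2 : ∀ s : ℝ, (1 / Λ) * Real.log (k / ν) ≤ s → 0 ≤ H s ∧ H s ≤ β * k) :
    ∀ ξ : ℝ, Tsc d β c H ξ ≤ min k (ν * Real.exp (Λ * ξ)) := by
  set r := √(c ^ 2 + 4 * β * d)
  have hr : r ^ 2 = c ^ 2 + 4 * β * d := sq_sqrt (by positivity)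
  have hcr : c < r := (le_abs_self c).trans_lt <| by
    rw [← sqrt_sq_eq_abs]
    exact sqrt_lt_sqrt (sq_nonneg c) (lt_add_of_pos_right _ (by positivity))
  set l₁ := (-c + r) / (2 * d)
  set l₂ := (c + r) / (2 * d)
  have hl₁ : 0 < l₁ := div_pos (by linarith) (by positivity)
  have hβ_eq : d * l₁ * l₂ = β := by
    simp only [l₁, l₂]; field_simp; linear_combination hr
  have hc_eq : d * (l₂ - l₁) = c := by
    simp only [l₁, l₂]; field_simp; ring
  have hM : d * (l₁ + Λ) * (l₂ - Λ) = β - d * Λ ^ 2 + c * Λ := by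
    linear_combination hβ_eq + Λ * hc_eq
  have hE : ν * exp (Λ * ((1 / Λ) * log (k / ν))) = k := by
    rw [← mul_assoc, mul_one_div_cancel hΛ.ne', one_mul, exp_log (by positivity)]
    field_simp
  exact greenOp_le_min hd hl₁ hΛ.le hΛ2 hν.le hE hH (fun s hs => by rw [hM]; exact hH1 s hs)
    (fun s hs => by rw [hβ_eq]; exact hH2 s hs)

theorem stmt_14 (d β c : ℝ) (hd : 0 < d) (hβ : 0 < β) (hc : 0 < c)
    (Λ ν k : ℝ) (hΛ : 0 < Λ)
    (hΛ2 : Λ < (c + Real.sqrt (c ^ 2 + 4 * β * d)) / (2 * d)) (hν : 0 < ν) (hk : 0 < k)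
    (hβbig : ((c + Real.sqrt (c ^ 2 + 4 * β * d)) / (2 * d)) * (d * Λ - c) ≤ β)
    (H : ℝ → ℝ) (hH : Continuous H)
    (hH1 : ∀ s : ℝ, s ≤ (1 / Λ) * Real.log (k / ν) →
      0 ≤ H s ∧ H s ≤ (β - d * Λ ^ 2 + c * Λ) * ν * Real.exp (Λ * s))
    (hH2 : ∀ s : ℝ, (1 / Λ) * Real.log (k / ν) ≤ s → 0 ≤ H s ∧ H s ≤ β * k) :
    ∀ ξ : ℝ, Tsc d β c H ξ ≤ min k (ν * Real.exp (Λ * ξ)) :=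
  stmt_14_general d β c hd hβ Λ ν k hΛ hΛ2 hν hk H hH hH1 hH2
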